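/- arXiv:0803.0178 — 4 statements merged into one kernel-verified Lean document; each statement's English description precedes it below -/
import Mathlib

section
/- Fix α > 0, ℓ ∈ ℝ, and ℓ̃ ∈ ℝ, and with β_c = log 4 define β_n = β_c + 1/n^α and K_n = K(β_c) + K'(β_c)/n^α + ℓ/(2n^{2α}) + ℓ̃/(6n^{3α}). Then as n → ∞, n^{3α}·G_{β_n,K_n}(x/n^{α/2}) converges to the Ginzburg–Landau polynomial g_ℓ(x) = (1/2)·β_c(K''(β_c) − ℓ)·x² − 4c₄·x⁴ + c₆·x⁶ uniformly for x in every compact subset of ℝ, where c₄ = 3/16 and c₆ = 9/40. -/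
open Real Filter

noncomputable def cgf (β t : ℝ) : ℝ :=
  Real.log ((1 + Real.exp (-β) * (Real.exp t + Real.exp (-t))) / (1 + 2 * Real.exp (-β)))

noncomputable def freeEnergyG (β K x : ℝ) : ℝ := β * K * x ^ 2 - cgf β (2 * β * K * x)

noncomputable def Kcurve (β : ℝ) : ℝ := (Real.exp β + 2) / (4 * β)

noncomputable def c4coef (β : ℝ) : ℝ := (Real.exp β + 2) ^ 2 * (4 - Real.exp β) / (8 * 24)

/-!
Write `ε = n^{-α}`, `β = log 4 + ε` and `B = βKₙ`. With `p = 2 / (e^β + 2)` one has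
`cgf β t = log (1 + p (cosh t - 1))`, and expanding `cosh` and `log` gives
`cgf β t = P_p(t²) + O(t⁸)` with a cubic `P_p`, uniformly for `β ≥ log 4` (where `p ≤ 1/3`).
Substituting `t = 2Bx√ε`,
`ε⁻³ G_{β,Kₙ}(x√ε) = ε⁻² a₂ x² + ε⁻¹ a₄ x⁴ + a₆ x⁶ + O(ε)` uniformly for bounded `x`.
Since `2pβ = 1 / K(β)`, the coefficient `a₂ = B (K(β) - Kₙ) / K(β)` is of order `ε²`: `Kₙ` is the
first-order Taylor polynomial of `K` at `β_c`, plus `ℓε²/2 + ℓ̃ε³/6`. The coefficient `a₄` is a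
multiple of `p (1 - 3p) = 2p² (e^ε - 1)`, of order `ε` because `p = 1/3` at `β_c = log 4`.
So the three rescaled coefficients converge, and polynomials whose coefficients converge
converge uniformly on compact sets.
-/

open Topology Set

theorem TendstoUniformlyOn.comp_tendsto {ι ι' X E : Type*} [UniformSpace E] {F : ι → X → E}
    {f : X → E} {l : Filter ι} {s : Set X} (h : TendstoUniformlyOn F f l s) {g : ι' → ι}
    {l' : Filter ι'} (hg : Tendsto g l' l) : TendstoUniformlyOn (fun i ↦ F (g i)) f l' s :=
  fun u hu ↦ hg.eventually (h u hu)

theorem tendstoUniformlyOn_of_continuous_of_tendsto {ι P X E : Type*} [UniformSpace P]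
    [WeaklyLocallyCompactSpace P] [UniformSpace X] [UniformSpace E] {Φ : P → X → E}
    (hΦ : Continuous ↿Φ) {K : Set X} (hK : IsCompact K) {l : Filter ι} {v : ι → P} {v₀ : P}
    (hv : Tendsto v l (𝓝 v₀)) : TendstoUniformlyOn (fun i ↦ Φ (v i)) (Φ v₀) l K := by
  obtain ⟨U, hU, hv₀U⟩ := exists_compact_mem_nhds v₀
  have h := ((hU.prod hK).uniformContinuousOn_of_continuous hΦ.continuousOn).tendstoUniformlyOn
    (mem_of_mem_nhds hv₀U)
  rw [nhdsWithin_eq_nhds.2 hv₀U] at h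
  exact h.comp_tendsto hv

theorem tendstoUniformlyOn_zero_of_abs_le {ι X : Type*} {l : Filter ι} {F : ι → X → ℝ}
    {g : ι → ℝ} {s : Set X} (hF : ∀ᶠ i in l, ∀ x ∈ s, |F i x| ≤ g i)
    (hg : Tendsto g l (𝓝 0)) : TendstoUniformlyOn F 0 l s := by
  rw [Metric.tendstoUniformlyOn_iff]
  intro δ hδ
  filter_upwards [hF, hg.eventually (gt_mem_nhds hδ)] with i hi hgi x hx
  simpa [dist_zero_left] using (hi x hx).trans_lt hgi

theorem tendsto_taylor_two_div_sq {f : ℝ → ℝ} {s : Set ℝ} {a : ℝ} (hs : IsOpen s)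
    (hs' : Convex ℝ s) (ha : a ∈ s) (hf : ContDiffOn ℝ 2 f s) :
    Tendsto (fun ε ↦ (f (a + ε) - f a - deriv f a * ε - iteratedDeriv 2 f a * ε ^ 2 / 2) / ε ^ 2)
      (𝓝 0) (𝓝 0) := by
  have htaylor : ∀ x, taylorWithinEval f 2 s a x
      = f a + deriv f a * (x - a) + iteratedDeriv 2 f a * (x - a) ^ 2 / 2 := by
    intro x
    simp only [taylor_within_apply, Finset.sum_range_succ, Finset.sum_range_zero,
      iteratedDerivWithin_of_isOpen hs ha, iteratedDeriv_zero, iteratedDeriv_one]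
    simp [Nat.factorial]
    ring
  have h := taylor_isLittleO hs' ha hf
  rw [hs.nhdsWithin_eq ha] at h
  replace h := h.comp_tendsto ((continuous_const_add a).tendsto' 0 a (add_zero a))
  simp only [Function.comp_def, htaylor, add_sub_cancel_left] at h
  simpa only [sub_sub] using h.tendsto_div_nhds_zero

noncomputable def logTaylor (x : ℝ) : ℝ := x - x ^ 2 / 2 + x ^ 3 / 3

/-- `cosh √s - 1` up to order `s³`. -/
noncomputable def coshTaylor (s : ℝ) : ℝ := s / 2 + s ^ 2 / 24 + s ^ 3 / 720

/-- `logTaylor (p * coshTaylor s)` truncated at order `s³`. -/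
noncomputable def logCoshTaylor (p s : ℝ) : ℝ :=
  p * s / 2 + (p / 24 - p ^ 2 / 8) * s ^ 2 + (p / 720 - p ^ 2 / 48 + p ^ 3 / 24) * s ^ 3

theorem abs_cosh_sub_one_sub_coshTaylor_le {t : ℝ} (ht : |t| ≤ 1) :
    |cosh t - 1 - coshTaylor (t ^ 2)| ≤ t ^ 8 / 1000 := by
  have hpos := abs_le.mp (Real.exp_bound ht (n := 8) (by norm_num))
  have hneg := abs_le.mp (Real.exp_bound (x := -t) (by rwa [abs_neg]) (n := 8) (by norm_num))
  simp only [Finset.sum_range_succ, Finset.sum_range_zero, abs_neg, Nat.factorial,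
    Nat.cast_ofNat] at hpos hneg
  have ht8 : |t| ^ 8 = t ^ 8 := by rw [pow_abs, abs_of_nonneg (by positivity)]
  rw [ht8] at hpos hneg
  rw [coshTaylor, cosh_eq, abs_le]
  constructor <;> nlinarith [hpos.1, hpos.2, hneg.1, hneg.2, pow_nonneg (abs_nonneg t) 8]

theorem abs_log_one_add_sub_logTaylor_le {x : ℝ} (h0 : 0 ≤ x) (h1 : x ≤ 1 / 3) :
    |log (1 + x) - logTaylor x| ≤ 3 / 2 * x ^ 4 := by
  have h := Real.abs_log_sub_add_sum_range_le (x := -x)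
    (by rw [abs_neg, abs_of_nonneg h0]; linarith) 3
  simp only [Finset.sum_range_succ, Finset.sum_range_zero, abs_neg, abs_of_nonneg h0,
    sub_neg_eq_add] at h
  calc |log (1 + x) - logTaylor x| ≤ x ^ (3 + 1) / (1 - x) := by
        convert h using 2; rw [logTaylor]; push_cast; ring_nf
    _ ≤ 3 / 2 * x ^ 4 := by
        rw [div_le_iff₀ (by linarith)]; nlinarith [pow_nonneg h0 4]

theorem abs_logTaylor_sub_logTaylor_le {x y : ℝ} (hx0 : 0 ≤ x) (hx1 : x ≤ 1) (hy0 : 0 ≤ y)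
    (hy1 : y ≤ 1) : |logTaylor x - logTaylor y| ≤ |x - y| := by
  have hfactor : logTaylor x - logTaylor y
      = (x - y) * (1 - (x + y) / 2 + (x ^ 2 + x * y + y ^ 2) / 3) := by
    simp only [logTaylor]; ring
  rw [hfactor, abs_mul]
  refine mul_le_of_le_one_right (abs_nonneg _) (abs_le.mpr ⟨?_, ?_⟩) <;>
    nlinarith [mul_nonneg hx0 hy0, mul_le_mul hx1 hy1 hy0 zero_le_one]

theorem abs_logTaylor_mul_coshTaylor_sub_logCoshTaylor_le {p s : ℝ} (hp0 : 0 ≤ p)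
    (hp1 : p ≤ 1 / 3) (hs0 : 0 ≤ s) (hs1 : s ≤ 1) :
    |logTaylor (p * coshTaylor s) - logCoshTaylor p s| ≤ s ^ 4 / 100 := by
  set q := coshTaylor s with hq_def
  set r := s ^ 2 / 24 + s ^ 3 / 720 with hr_def
  have hs2 : s ^ 2 ≤ s := by nlinarith
  have hs3 : s ^ 3 ≤ s ^ 2 := by nlinarith
  have hs4 := pow_nonneg hs0 4
  have hr0 : 0 ≤ r := by positivity
  have hr : r ≤ s ^ 2 / 20 := by rw [hr_def]; linarith
  have e2 : 0 ≤ q ^ 2 - s ^ 2 / 4 - s ^ 3 / 24 ∧ q ^ 2 - s ^ 2 / 4 - s ^ 3 / 24 ≤ s ^ 4 / 100 := by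
    rw [show q ^ 2 - s ^ 2 / 4 - s ^ 3 / 24
      = s ^ 4 * (1 / 576 + 1 / 720 + s / 8640 + s ^ 2 / 518400) by rw [hq_def, coshTaylor]; ring]
    constructor
    · positivity
    · nlinarith [mul_le_mul_of_nonneg_left hs1 hs4,
        mul_le_mul_of_nonneg_left (pow_le_one₀ hs0 hs1 (n := 2)) hs4]
  have e3 : 0 ≤ q ^ 3 - s ^ 3 / 8 ∧ q ^ 3 - s ^ 3 / 8 ≤ s ^ 4 / 10 := by
    rw [show q ^ 3 - s ^ 3 / 8 = r * (3 * s ^ 2 / 4 + 3 * s * r / 2 + r ^ 2) by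
      rw [hq_def, coshTaylor]; ring]
    constructor
    · positivity
    · have hb : 3 * s ^ 2 / 4 + 3 * s * r / 2 + r ^ 2 ≤ s ^ 2 := by
        nlinarith [mul_le_mul_of_nonneg_left hr hs0, mul_le_mul hr hr hr0 (by positivity)]
      nlinarith [mul_le_mul hr hb (by positivity) (by positivity)]
  have hD : logTaylor (p * q) - logCoshTaylor p s
      = -(p ^ 2 / 2) * (q ^ 2 - s ^ 2 / 4 - s ^ 3 / 24) + p ^ 3 / 3 * (q ^ 3 - s ^ 3 / 8) := by
    simp only [logTaylor, logCoshTaylor, hq_def, coshTaylor]; ring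
  have hp2 : p ^ 2 ≤ 1 / 9 := by nlinarith
  have hp3 : p ^ 3 ≤ 1 / 27 := by nlinarith
  have hA := mul_le_mul hp2 e2.2 e2.1 (by norm_num)
  have hB := mul_le_mul hp3 e3.2 e3.1 (by norm_num)
  have hA0 := mul_nonneg (pow_nonneg hp0 2) e2.1
  have hB0 := mul_nonneg (pow_nonneg hp0 3) e3.1
  rw [hD, abs_le]
  constructor <;> linarith

theorem abs_log_one_add_mul_sub_logCoshTaylor_le {p s u : ℝ} (hp0 : 0 ≤ p) (hp1 : p ≤ 1 / 3)
    (hs0 : 0 ≤ s) (hs1 : s ≤ 1) (hu : |u - coshTaylor s| ≤ s ^ 4 / 1000) :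
    |log (1 + p * u) - logCoshTaylor p s| ≤ s ^ 4 := by
  set q := coshTaylor s with hq_def
  have hs4 := pow_nonneg hs0 4
  have hs4s : s ^ 4 ≤ s := pow_le_of_le_one hs0 hs1 (by norm_num)
  have hq0 : 0 ≤ q := by rw [hq_def, coshTaylor]; positivity
  have hq : s / 2 ≤ q ∧ q ≤ 2 * s / 3 := by rw [hq_def, coshTaylor]; constructor <;> nlinarith
  obtain ⟨hu₁, hu₂⟩ := abs_le.mp hu
  have hu0 : 0 ≤ u := by linarith
  have hus : u ≤ s := by linarith
  have hx0 : 0 ≤ p * u := mul_nonneg hp0 hu0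
  have hxs : p * u ≤ s / 3 := by nlinarith [mul_le_mul hp1 hus hu0 (by norm_num)]
  have hy1 : p * q ≤ 1 := by nlinarith [mul_le_mul hp1 hq.2 hq0 (by norm_num)]
  have hlog := abs_log_one_add_sub_logTaylor_le hx0 (by linarith)
  have hx4 : (p * u) ^ 4 ≤ (s / 3) ^ 4 := pow_le_pow_left₀ hx0 hxs 4
  have hlip := abs_logTaylor_sub_logTaylor_le hx0 (by linarith) (mul_nonneg hp0 hq0) hy1
  have hxy : |p * u - p * q| ≤ s ^ 4 / 3000 := by
    rw [← mul_sub, abs_mul, abs_of_nonneg hp0]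
    nlinarith [mul_le_mul hp1 hu (abs_nonneg _) (by norm_num)]
  have hpoly := abs_logTaylor_mul_coshTaylor_sub_logCoshTaylor_le hp0 hp1 hs0 hs1
  have hx4' : (s / 3) ^ 4 = s ^ 4 / 81 := by ring
  calc |log (1 + p * u) - logCoshTaylor p s|
      ≤ |log (1 + p * u) - logTaylor (p * u)| + (|logTaylor (p * u) - logTaylor (p * q)|
        + |logTaylor (p * q) - logCoshTaylor p s|) :=
        (abs_sub_le _ _ _).trans (add_le_add_right (abs_sub_le _ _ _) _)
    _ ≤ s ^ 4 := by linarith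

/-- The single-site probability `2e^{-β} / (1 + 2e^{-β})` of a nonzero spin. -/
noncomputable def spinProb (β : ℝ) : ℝ := 2 / (exp β + 2)

theorem cgf_eq_log_one_add_spinProb_mul (β t : ℝ) :
    cgf β t = log (1 + spinProb β * (cosh t - 1)) := by
  rw [cgf, spinProb, cosh_eq, exp_neg β]
  congr 1
  field_simp
  ring

theorem spinProb_nonneg (β : ℝ) : 0 ≤ spinProb β := by unfold spinProb; positivity

theorem spinProb_le_one_third {β : ℝ} (hβ : log 4 ≤ β) : spinProb β ≤ 1 / 3 := by
  have h4 : (4 : ℝ) ≤ exp β := by simpa [exp_log] using exp_le_exp.mpr hβ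
  rw [spinProb, div_le_div_iff₀ (by positivity) (by norm_num)]
  linarith

theorem spinProb_eq_inv {β : ℝ} (hβ : β ≠ 0) : spinProb β = (2 * β * Kcurve β)⁻¹ := by
  rw [spinProb, Kcurve]
  field_simp
  ring

theorem one_sub_three_mul_spinProb (ε : ℝ) :
    1 - 3 * spinProb (log 4 + ε) = 2 * spinProb (log 4 + ε) * (exp ε - 1) := by
  rw [spinProb, exp_add, exp_log (by norm_num)]
  field_simp
  ring

theorem abs_cgf_sub_logCoshTaylor_le {β t : ℝ} (hβ : log 4 ≤ β) (ht : |t| ≤ 1) :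
    |cgf β t - logCoshTaylor (spinProb β) (t ^ 2)| ≤ t ^ 8 := by
  have hcosh := abs_cosh_sub_one_sub_coshTaylor_le ht
  have ht2 : t ^ 2 ≤ 1 := by nlinarith [sq_abs t, abs_nonneg t]
  rw [show t ^ 8 = (t ^ 2) ^ 4 by ring] at hcosh ⊢
  rw [cgf_eq_log_one_add_spinProb_mul]
  exact abs_log_one_add_mul_sub_logCoshTaylor_le (spinProb_nonneg β) (spinProb_le_one_third hβ)
    (sq_nonneg t) ht2 hcosh

noncomputable def quadCoeff (p B : ℝ) : ℝ := B - 2 * p * B ^ 2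

noncomputable def quartCoeff (p B : ℝ) : ℝ := -16 * (p / 24 - p ^ 2 / 8) * B ^ 4

noncomputable def sextCoeff (p B : ℝ) : ℝ := -64 * (p / 720 - p ^ 2 / 48 + p ^ 3 / 24) * B ^ 6

theorem freeEnergyG_eq (β K y : ℝ) :
    freeEnergyG β K y = quadCoeff (spinProb β) (β * K) * y ^ 2
      + quartCoeff (spinProb β) (β * K) * y ^ 4 + sextCoeff (spinProb β) (β * K) * y ^ 6
      - (cgf β (2 * β * K * y) - logCoshTaylor (spinProb β) ((2 * β * K * y) ^ 2)) := by
  rw [freeEnergyG, quadCoeff, quartCoeff, sextCoeff, logCoshTaylor]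
  ring

/-- `Kₙ` of the statement, as a function of `ε = n^{-α}`. -/
noncomputable def tangentK (ℓ ℓt ε : ℝ) : ℝ :=
  Kcurve (log 4) + deriv Kcurve (log 4) * ε + ℓ * ε ^ 2 / 2 + ℓt * ε ^ 3 / 6

theorem log_four_pos : 0 < log 4 := log_pos (by norm_num)

theorem contDiffOn_Kcurve : ContDiffOn ℝ 2 Kcurve (Ioi 0) :=
  (contDiff_exp.add contDiff_const).contDiffOn.div (contDiff_const.mul contDiff_id).contDiffOn
    fun _ hβ ↦ by simp only [mem_Ioi] at hβ; positivity

theorem tendsto_Kcurve_sub_tangentK_div_sq (ℓ ℓt : ℝ) :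
    Tendsto (fun ε ↦ (Kcurve (log 4 + ε) - tangentK ℓ ℓt ε) / ε ^ 2) (𝓝[≠] 0)
      (𝓝 ((iteratedDeriv 2 Kcurve (log 4) - ℓ) / 2)) := by
  have htaylor := tendsto_taylor_two_div_sq isOpen_Ioi (convex_Ioi 0) log_four_pos
    contDiffOn_Kcurve
  have hlin : Tendsto (fun ε : ℝ ↦ (iteratedDeriv 2 Kcurve (log 4) - ℓ) / 2 - ℓt * ε / 6) (𝓝 0)
      (𝓝 ((iteratedDeriv 2 Kcurve (log 4) - ℓ) / 2)) := by
    simpa using (by fun_prop : Continuous fun ε : ℝ ↦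
      (iteratedDeriv 2 Kcurve (log 4) - ℓ) / 2 - ℓt * ε / 6).tendsto 0
  have h := (htaylor.add hlin).mono_left (nhdsWithin_le_nhds (s := {0}ᶜ))
  rw [zero_add] at h
  refine h.congr' ?_
  filter_upwards [self_mem_nhdsWithin] with ε (hε : ε ≠ 0)
  rw [tangentK]
  field_simp
  ring

theorem tendsto_spinProb_log_four_add :
    Tendsto (fun ε ↦ spinProb (log 4 + ε)) (𝓝 0) (𝓝 (1 / 3)) := by
  have h : Continuous fun ε ↦ spinProb (log 4 + ε) :=
    continuous_const.div (by fun_prop) fun ε ↦ by positivity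
  convert h.tendsto 0 using 2
  norm_num [spinProb, exp_log]

theorem tendsto_mul_tangentK (ℓ ℓt : ℝ) :
    Tendsto (fun ε ↦ (log 4 + ε) * tangentK ℓ ℓt ε) (𝓝 0) (𝓝 (3 / 2)) := by
  have h : Continuous fun ε ↦ (log 4 + ε) * tangentK ℓ ℓt ε := by unfold tangentK; fun_prop
  convert h.tendsto 0 using 2
  simp [tangentK, Kcurve, exp_log]
  field_simp [log_four_pos.ne']
  norm_num

theorem tendsto_quadCoeff_div_sq (ℓ ℓt : ℝ) :
    Tendsto (fun ε ↦ quadCoeff (spinProb (log 4 + ε)) ((log 4 + ε) * tangentK ℓ ℓt ε) / ε ^ 2)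
      (𝓝[>] 0) (𝓝 (1 / 2 * log 4 * (iteratedDeriv 2 Kcurve (log 4) - ℓ))) := by
  have hKc : ContinuousAt Kcurve (log 4) :=
    contDiffOn_Kcurve.continuousOn.continuousAt (Ioi_mem_nhds log_four_pos)
  have hratio : Tendsto (fun ε ↦ (log 4 + ε) * tangentK ℓ ℓt ε / Kcurve (log 4 + ε)) (𝓝 0)
      (𝓝 (log 4)) := by
    have hKc0 : Kcurve (log 4) ≠ 0 := by unfold Kcurve; have := log_four_pos; positivity
    have h := ((by unfold tangentK; fun_prop : Continuous fun ε ↦ (log 4 + ε) * tangentK ℓ ℓt ε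
      ).continuousAt (x := 0)).div (hKc.comp_of_eq (by fun_prop) (add_zero _)) (by simpa using hKc0)
    convert h.tendsto using 2 <;> simp [Pi.div_apply, tangentK, hKc0]
  have h := (hratio.mono_left nhdsWithin_le_nhds).mul
    ((tendsto_Kcurve_sub_tangentK_div_sq ℓ ℓt).mono_left (nhdsGT_le_nhdsNE 0))
  rw [show 1 / 2 * log 4 * (iteratedDeriv 2 Kcurve (log 4) - ℓ)
    = log 4 * ((iteratedDeriv 2 Kcurve (log 4) - ℓ) / 2) by ring]
  refine h.congr' ?_
  filter_upwards [self_mem_nhdsWithin] with ε (hε : 0 < ε)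
  have hβ : 0 < log 4 + ε := by linarith [log_four_pos]
  have hKc : Kcurve (log 4 + ε) ≠ 0 := by unfold Kcurve; positivity
  rw [quadCoeff, spinProb_eq_inv hβ.ne']
  field_simp

theorem tendsto_quartCoeff_div (ℓ ℓt : ℝ) :
    Tendsto (fun ε ↦ quartCoeff (spinProb (log 4 + ε)) ((log 4 + ε) * tangentK ℓ ℓt ε) / ε)
      (𝓝[>] 0) (𝓝 (-(3 / 4))) := by
  have hslope : Tendsto (fun ε ↦ ε⁻¹ * (exp ε - 1)) (𝓝[>] 0) (𝓝 1) := by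
    simpa using (hasDerivAt_exp 0).tendsto_slope_zero_right
  have h := (((tendsto_spinProb_log_four_add.pow 2).mul ((tendsto_mul_tangentK ℓ ℓt).pow 4)
    ).mono_left nhdsWithin_le_nhds).const_mul (-(4 / 3)) |>.mul hslope
  rw [show -(3 / 4 : ℝ) = -(4 / 3) * ((1 / 3) ^ 2 * (3 / 2) ^ 4) * 1 by norm_num]
  refine h.congr' ?_
  filter_upwards [self_mem_nhdsWithin] with ε (hε : 0 < ε)
  rw [quartCoeff, show ∀ p : ℝ, p / 24 - p ^ 2 / 8 = p * (1 - 3 * p) / 24 by intro p; ring,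
    one_sub_three_mul_spinProb]
  field_simp
  ring

theorem tendsto_sextCoeff (ℓ ℓt : ℝ) :
    Tendsto (fun ε ↦ sextCoeff (spinProb (log 4 + ε)) ((log 4 + ε) * tangentK ℓ ℓt ε))
      (𝓝[>] 0) (𝓝 (9 / 40)) := by
  have hcont : Continuous fun v : ℝ × ℝ ↦ sextCoeff v.1 v.2 := by unfold sextCoeff; fun_prop
  have h := ((hcont.tendsto (1 / 3, 3 / 2)).comp
    (tendsto_spinProb_log_four_add.prodMk_nhds (tendsto_mul_tangentK ℓ ℓt))).mono_left
    (nhdsWithin_le_nhds (s := Ioi 0))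
  convert h using 2 <;> norm_num [sextCoeff]

theorem tendstoUniformlyOn_cgf_sub_logCoshTaylor {K : ℝ → ℝ} {b M : ℝ}
    (hK : ∀ᶠ ε in 𝓝[>] 0, |(log 4 + ε) * K ε| ≤ b) {C : Set ℝ} (hC : ∀ x ∈ C, |x| ≤ M) :
    TendstoUniformlyOn (fun ε x ↦ (ε⁻¹) ^ 3 *
        (cgf (log 4 + ε) (2 * (log 4 + ε) * K ε * (x * √ε))
          - logCoshTaylor (spinProb (log 4 + ε)) ((2 * (log 4 + ε) * K ε * (x * √ε)) ^ 2)))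
      0 (𝓝[>] 0) C := by
  set c := (2 * b * M) ^ 2
  have hsmall : ∀ᶠ ε in 𝓝[>] (0 : ℝ), c * ε < 1 :=
    ((continuous_const_mul c).tendsto' 0 0 (mul_zero c)).eventually
      (gt_mem_nhds one_pos) |>.filter_mono nhdsWithin_le_nhds
  refine tendstoUniformlyOn_zero_of_abs_le (g := fun ε ↦ c ^ 4 * ε) ?_
    (((continuous_const_mul (c ^ 4)).tendsto' 0 0 (mul_zero _)).mono_left nhdsWithin_le_nhds)
  filter_upwards [self_mem_nhdsWithin, hK, hsmall] with ε (hε : 0 < ε) hKε hcε x hx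
  set t := 2 * (log 4 + ε) * K ε * (x * √ε)
  have ht2 : t ^ 2 ≤ c * ε := by
    have hbx : |(log 4 + ε) * K ε| * |x| ≤ b * M :=
      mul_le_mul hKε (hC x hx) (abs_nonneg x) ((abs_nonneg _).trans hKε)
    calc t ^ 2 = 4 * (|(log 4 + ε) * K ε| * |x|) ^ 2 * ε := by
          simp only [t, mul_pow, sq_abs, sq_sqrt hε.le]; ring
      _ ≤ 4 * (b * M) ^ 2 * ε := by gcongr
      _ = c * ε := by ring
  have ht : |t| ≤ 1 := by
    rw [← sq_le_one_iff_abs_le_one]; linarith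
  calc |(ε⁻¹) ^ 3 * (cgf (log 4 + ε) t - logCoshTaylor (spinProb (log 4 + ε)) (t ^ 2))|
      ≤ (ε⁻¹) ^ 3 * t ^ 8 := by
        rw [abs_mul, abs_of_pos (by positivity)]
        gcongr
        exact abs_cgf_sub_logCoshTaylor_le (by linarith) ht
    _ = (ε⁻¹) ^ 3 * (t ^ 2) ^ 4 := by ring
    _ ≤ (ε⁻¹) ^ 3 * (c * ε) ^ 4 := by gcongr
    _ = c ^ 4 * ε := by field_simp

noncomputable def ginzburgLandau (ℓ x : ℝ) : ℝ :=
  (1 / 2) * log 4 * (iteratedDeriv 2 Kcurve (log 4) - ℓ) * x ^ 2 -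
    4 * (3 / 16) * x ^ 4 + (9 / 40) * x ^ 6

noncomputable def rescaledFreeEnergy (ℓ ℓt ε x : ℝ) : ℝ :=
  (ε⁻¹) ^ 3 * freeEnergyG (log 4 + ε) (tangentK ℓ ℓt ε) (x * √ε)

theorem tendstoUniformlyOn_rescaledFreeEnergy (ℓ ℓt : ℝ) {C : Set ℝ} (hC : IsCompact C) :
    TendstoUniformlyOn (rescaledFreeEnergy ℓ ℓt) (ginzburgLandau ℓ) (𝓝[>] 0) C := by
  obtain ⟨M, hM⟩ := hC.isBounded.exists_norm_le
  have hcoeff := (tendsto_quadCoeff_div_sq ℓ ℓt).prodMk_nhds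
    ((tendsto_quartCoeff_div ℓ ℓt).prodMk_nhds (tendsto_sextCoeff ℓ ℓt))
  have hpoly := tendstoUniformlyOn_of_continuous_of_tendsto
    (Φ := fun (v : ℝ × ℝ × ℝ) x ↦ v.1 * x ^ 2 + v.2.1 * x ^ 4 + v.2.2 * x ^ 6) (by fun_prop) hC
    hcoeff
  have hK : ∀ᶠ ε in 𝓝[>] 0, |(log 4 + ε) * tangentK ℓ ℓt ε| ≤ 2 :=
    ((tendsto_mul_tangentK ℓ ℓt).abs.eventually (ge_mem_nhds (by norm_num))).filter_mono
      nhdsWithin_le_nhds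
  have hrem := tendstoUniformlyOn_cgf_sub_logCoshTaylor hK (C := C) (M := M) (by simpa using hM)
  refine ((hpoly.sub hrem).congr ?_).congr_right ?_
  · filter_upwards [self_mem_nhdsWithin] with ε (hε : 0 < ε) x _
    have hs : √ε ^ 2 = ε := sq_sqrt hε.le
    simp only [rescaledFreeEnergy, freeEnergyG_eq, Pi.sub_apply]
    rw [show (x * √ε) ^ 4 = x ^ 4 * (√ε ^ 2) ^ 2 by ring,
      show (x * √ε) ^ 6 = x ^ 6 * (√ε ^ 2) ^ 3 by ring, mul_pow x, hs]
    field_simp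
  · intro x _
    simp only [ginzburgLandau, Pi.sub_apply, Pi.zero_apply, sub_zero]
    ring

theorem rescaledFreeEnergy_eq (ℓ ℓt α x : ℝ) {N : ℝ} (hN : 0 < N) :
    N ^ (3 * α) * freeEnergyG (log 4 + 1 / N ^ α)
      (Kcurve (log 4) + deriv Kcurve (log 4) / N ^ α + ℓ / (2 * N ^ (2 * α))
        + ℓt / (6 * N ^ (3 * α))) (x / N ^ (α / 2))
      = rescaledFreeEnergy ℓ ℓt (N ^ α)⁻¹ x := by
  have hpow : ∀ k : ℕ, N ^ (k * α) = (N ^ α) ^ k := fun k ↦ by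
    rw [← rpow_natCast, ← rpow_mul hN.le, mul_comm]
  have hsqrt : N ^ (α / 2) = √(N ^ α) := by
    rw [sqrt_eq_rpow, ← rpow_mul hN.le, div_eq_mul_one_div]
  have h2 := hpow 2
  have h3 := hpow 3
  push_cast at h2 h3
  rw [rescaledFreeEnergy, tangentK, h2, h3, hsqrt, sqrt_inv, inv_inv]
  ring_nf

/-- uniform convergence of scaled free-energy functionals to the
Ginzburg--Landau polynomial `g_ℓ` for the sequence tangent to the spinodal
curve at the tricritical point. -/
theorem stmt6 (α ℓ ℓt : ℝ) (hα : 0 < α) :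
    ∀ C : Set ℝ, IsCompact C →
      TendstoUniformlyOn
        (fun (n : ℕ) (x : ℝ) =>
          (n : ℝ) ^ (3 * α) *
            freeEnergyG (Real.log 4 + 1 / (n : ℝ) ^ α)
              (Kcurve (Real.log 4) + deriv Kcurve (Real.log 4) / (n : ℝ) ^ α +
                ℓ / (2 * (n : ℝ) ^ (2 * α)) + ℓt / (6 * (n : ℝ) ^ (3 * α)))
              (x / (n : ℝ) ^ (α / 2)))
        (fun x : ℝ =>
          (1 / 2) * Real.log 4 * (iteratedDeriv 2 Kcurve (Real.log 4) - ℓ) * x ^ 2 -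
            4 * (3 / 16) * x ^ 4 + (9 / 40) * x ^ 6)
        atTop C := by
  intro C hC
  have hε : Tendsto (fun n : ℕ ↦ ((n : ℝ) ^ α)⁻¹) atTop (𝓝[>] 0) :=
    tendsto_inv_atTop_nhdsGT_zero.comp ((tendsto_rpow_atTop hα).comp tendsto_natCast_atTop_atTop)
  refine ((tendstoUniformlyOn_rescaledFreeEnergy ℓ ℓt hC).comp_tendsto hε).congr ?_
  filter_upwards [eventually_gt_atTop 0] with n hn x _
  exact (rescaledFreeEnergy_eq ℓ ℓt α x (Nat.cast_pos.mpr hn)).symm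
end

section
/- Let β_c = log 4, c₄ = 3/16, c₆ = 9/40, and for ℓ ∈ ℝ let g_ℓ(x) = (1/2)·β_c(K''(β_c) − ℓ)·x² − 4c₄·x⁴ + c₆·x⁶. Define ℓ_c = (−β_c² − 8β_c + 12)/(4β_c³), which equals K''(β_c) − 5/(4β_c). Then: (i) g_ℓ has a nonzero global minimum point if and only if ℓ ≥ ℓ_c; (ii) if ℓ > ℓ_c, then the set of global minimum points of g_ℓ over ℝ is exactly {x̄(ℓ), −x̄(ℓ)}, where x̄(ℓ) = (√10/3)·(1 + (1 − (3β_c/5)(K''(β_c) − ℓ))^{1/2})^{1/2}; (iii) if ℓ = ℓ_c, then the set of global minimum points of g_ℓ over ℝ is exactly {0, (5/3)^{1/2}, −(5/3)^{1/2}}. -/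
/-!
Write `t = x²`, so that `g_ℓ(x) = a t - (3/4) t² + (9/40) t³` with `a = (β_c/2)(K''(β_c) - ℓ)`,
and `a = 5/8` exactly at `ℓ = ℓ_c`. If `t̄` is the larger critical point of this cubic in `t`,
then `g_ℓ(y) - g_ℓ(√t̄) = (9/40)(y² - t̄)²(y² + 2t̄ - 10/3)`, which is nonnegative for all `y`
precisely when `t̄ ≥ 5/3`, i.e. `a ≤ 5/8`. For `a > 5/8` instead `g_ℓ > 0 = g_ℓ(0)` off the origin,
and at `a = 5/8` we have `g_ℓ(x) = x²(3x² - 5)²/40`, with the three zeros `0, ±√(5/3)`.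
-/

open Real Filter

lemma hasDerivAt_Kcurve {x : ℝ} (hx : x ≠ 0) :
    HasDerivAt Kcurve ((x * exp x - exp x - 2) / (4 * x ^ 2)) x := by
  have hnum : HasDerivAt (fun x : ℝ => exp x + 2) (exp x) x := (hasDerivAt_exp x).add_const 2
  have hden : HasDerivAt (fun x : ℝ => 4 * x) 4 x := by
    simpa using (hasDerivAt_id x).const_mul 4
  refine (hnum.div hden (by simpa using hx)).congr_deriv ?_
  field_simp
  ring

lemma hasDerivAt_deriv_Kcurve {x : ℝ} (hx : x ≠ 0) :
    HasDerivAt (deriv Kcurve) ((x ^ 2 - 2 * x + 2 + 4 / exp x) * exp x / (4 * x ^ 3)) x := by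
  have hnum : HasDerivAt (fun x : ℝ => x * exp x - exp x - 2) (x * exp x) x := by
    refine ((((hasDerivAt_id x).mul (hasDerivAt_exp x)).sub (hasDerivAt_exp x)).sub_const 2).congr_deriv ?_
    simp
  have hden : HasDerivAt (fun x : ℝ => 4 * x ^ 2) (8 * x) x := by
    refine ((hasDerivAt_pow 2 x).const_mul 4).congr_deriv ?_
    ring
  have hderiv : deriv Kcurve =ᶠ[nhds x] fun x => (x * exp x - exp x - 2) / (4 * x ^ 2) := by
    filter_upwards [eventually_ne_nhds hx] with y hy
    exact (hasDerivAt_Kcurve hy).deriv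
  refine ((hnum.div hden (by positivity)).congr_of_eventuallyEq hderiv).congr_deriv ?_
  field_simp
  ring

lemma iteratedDeriv_two_Kcurve_log_four :
    iteratedDeriv 2 Kcurve (log 4) = (log 4 ^ 2 - 2 * log 4 + 3) / log 4 ^ 3 := by
  have hβ : log 4 ≠ 0 := (log_pos (by norm_num)).ne'
  rw [iteratedDeriv_succ, iteratedDeriv_one, (hasDerivAt_deriv_Kcurve hβ).deriv,
    exp_log (by norm_num)]
  field_simp
  ring

noncomputable def sextic (a x : ℝ) : ℝ := a * x ^ 2 - 3 / 4 * x ^ 4 + 9 / 40 * x ^ 6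

lemma sextic_neg (a x : ℝ) : sextic a (-x) = sextic a x := by
  simp only [sextic]
  ring

lemma sextic_zero (a : ℝ) : sextic a 0 = 0 := by
  simp [sextic]

lemma sextic_sub_sextic_of_critical {a x : ℝ} (hx : 27 / 40 * x ^ 4 - 3 / 2 * x ^ 2 + a = 0)
    (y : ℝ) :
    sextic a y - sextic a x = 9 / 40 * (y ^ 2 - x ^ 2) ^ 2 * (y ^ 2 + 2 * x ^ 2 - 10 / 3) := by
  simp only [sextic]
  linear_combination (y ^ 2 - x ^ 2) * hx

/-- The nonzero global minimum point `x̄` of `sextic a`, for `a ≤ 5/8`. -/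
noncomputable def xbar (a : ℝ) : ℝ := √10 / 3 * √(1 + √(1 - 6 * a / 5))

lemma xbar_pos (a : ℝ) : 0 < xbar a := by
  unfold xbar
  positivity

lemma sq_xbar (a : ℝ) : xbar a ^ 2 = 10 / 9 * (1 + √(1 - 6 * a / 5)) := by
  rw [xbar, mul_pow, div_pow, sq_sqrt (by norm_num), sq_sqrt (by positivity)]
  ring

lemma xbar_critical {a : ℝ} (ha : a ≤ 5 / 6) :
    27 / 40 * xbar a ^ 4 - 3 / 2 * xbar a ^ 2 + a = 0 := by
  have hs : √(1 - 6 * a / 5) ^ 2 = 1 - 6 * a / 5 := sq_sqrt (by linarith)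
  rw [show xbar a ^ 4 = (xbar a ^ 2) ^ 2 by ring, sq_xbar]
  linear_combination 5 / 6 * hs

lemma five_thirds_le_sq_xbar {a : ℝ} (ha : a ≤ 5 / 8) : 5 / 3 ≤ xbar a ^ 2 := by
  have : 1 / 2 ≤ √(1 - 6 * a / 5) :=
    le_sqrt_of_sq_le (by linarith)
  rw [sq_xbar]
  linarith

lemma five_thirds_lt_sq_xbar {a : ℝ} (ha : a < 5 / 8) : 5 / 3 < xbar a ^ 2 := by
  have : 1 / 2 < √(1 - 6 * a / 5) :=
    lt_sqrt_of_sq_lt (by linarith)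
  rw [sq_xbar]
  linarith

lemma sextic_xbar_le {a : ℝ} (ha : a ≤ 5 / 8) (y : ℝ) : sextic a (xbar a) ≤ sextic a y := by
  have hdiff := sextic_sub_sextic_of_critical (xbar_critical (a := a) (by linarith)) y
  have := five_thirds_le_sq_xbar ha
  nlinarith [sq_nonneg y, sq_nonneg (y ^ 2 - xbar a ^ 2)]

lemma eq_xbar_or_eq_neg_of_sextic_le {a y : ℝ} (ha : a < 5 / 8)
    (hy : sextic a y ≤ sextic a (xbar a)) : y = xbar a ∨ y = -xbar a := by
  have hdiff := sextic_sub_sextic_of_critical (xbar_critical (a := a) (by linarith)) y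
  have hpos : 0 < y ^ 2 + 2 * xbar a ^ 2 - 10 / 3 := by
    nlinarith [five_thirds_lt_sq_xbar ha, sq_nonneg y]
  have hsq : (y ^ 2 - xbar a ^ 2) ^ 2 = 0 := by
    refine le_antisymm ?_ (sq_nonneg _)
    by_contra! h
    nlinarith [mul_pos h hpos]
  exact sq_eq_sq_iff_eq_or_eq_neg.mp (sub_eq_zero.mp (pow_eq_zero_iff two_ne_zero |>.mp hsq))

lemma setOf_isMin_sextic {a : ℝ} (ha : a < 5 / 8) :
    {x | ∀ y, sextic a x ≤ sextic a y} = {xbar a, -xbar a} := by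
  ext x
  simp only [Set.mem_ofPred_eq, Set.mem_insert_iff, Set.mem_singleton_iff]
  constructor
  · exact fun hx => eq_xbar_or_eq_neg_of_sextic_le ha (hx (xbar a))
  · rintro (rfl | rfl) y
    · exact sextic_xbar_le ha.le y
    · rw [sextic_neg]
      exact sextic_xbar_le ha.le y

lemma sextic_pos {a x : ℝ} (ha : 5 / 8 < a) (hx : x ≠ 0) : 0 < sextic a x := by
  have h2 : 0 < x ^ 2 := by positivity
  simp only [sextic]
  nlinarith [mul_pos h2 (mul_pos h2 h2), mul_nonneg h2.le (sq_nonneg (x ^ 2 - 5 / 3))]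

lemma exists_ne_zero_isMin_sextic_iff (a : ℝ) :
    (∃ x, x ≠ 0 ∧ ∀ y, sextic a x ≤ sextic a y) ↔ a ≤ 5 / 8 := by
  constructor
  · rintro ⟨x, hx, hmin⟩
    by_contra! ha
    have := hmin 0
    rw [sextic_zero] at this
    exact this.not_gt (sextic_pos ha hx)
  · exact fun ha => ⟨xbar a, (xbar_pos a).ne', sextic_xbar_le ha⟩

lemma sextic_five_eighths (x : ℝ) : sextic (5 / 8) x = x ^ 2 * (3 * x ^ 2 - 5) ^ 2 / 40 := by
  simp only [sextic]
  ring

lemma setOf_isMin_sextic_five_eighths :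
    {x | ∀ y, sextic (5 / 8) x ≤ sextic (5 / 8) y} = {0, √(5 / 3), -√(5 / 3)} := by
  have hnonneg (y : ℝ) : 0 ≤ sextic (5 / 8) y := by
    rw [sextic_five_eighths]
    positivity
  have hzero_iff (x : ℝ) : sextic (5 / 8) x = 0 ↔ x = 0 ∨ x = √(5 / 3) ∨ x = -√(5 / 3) := by
    rw [sextic_five_eighths, div_eq_zero_iff, mul_eq_zero, pow_eq_zero_iff two_ne_zero,
      pow_eq_zero_iff two_ne_zero, ← sq_eq_sq_iff_eq_or_eq_neg, sq_sqrt (by norm_num)]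
    constructor
    · rintro ((h | h) | h)
      exacts [Or.inl h, Or.inr (by linarith), absurd h (by norm_num)]
    · rintro (h | h)
      exacts [Or.inl (Or.inl h), Or.inl (Or.inr (by linarith))]
  ext x
  simp only [Set.mem_ofPred_eq, Set.mem_insert_iff, Set.mem_singleton_iff]
  constructor
  · intro hx
    exact (hzero_iff x).mp (le_antisymm (sextic_zero (5 / 8) ▸ hx 0) (hnonneg x))
  · intro hx y
    rw [(hzero_iff x).mpr hx]
    exact hnonneg y

/-- global minimum points of `g_ℓ(x) = (1/2)β_c(K''(β_c) − ℓ)x² − 4c₄x⁴ + c₆x⁶`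
with the discontinuous bifurcation at `ℓ_c`. -/
theorem stmt7 (g : ℝ → ℝ → ℝ)
    (hg : ∀ ℓ x : ℝ, g ℓ x =
      (1 / 2) * Real.log 4 * (iteratedDeriv 2 Kcurve (Real.log 4) - ℓ) * x ^ 2 -
        4 * (3 / 16) * x ^ 4 + (9 / 40) * x ^ 6)
    (ℓc : ℝ)
    (hℓc : ℓc = (-(Real.log 4) ^ 2 - 8 * Real.log 4 + 12) / (4 * (Real.log 4) ^ 3)) :
    (ℓc = iteratedDeriv 2 Kcurve (Real.log 4) - 5 / (4 * Real.log 4)) ∧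
    (∀ ℓ : ℝ, (∃ x : ℝ, x ≠ 0 ∧ ∀ y : ℝ, g ℓ x ≤ g ℓ y) ↔ ℓc ≤ ℓ) ∧
    (∀ ℓ : ℝ, ℓc < ℓ →
      {x : ℝ | ∀ y : ℝ, g ℓ x ≤ g ℓ y} =
        {Real.sqrt 10 / 3 *
            Real.sqrt (1 + Real.sqrt (1 -
              3 * Real.log 4 / 5 * (iteratedDeriv 2 Kcurve (Real.log 4) - ℓ))),
         -(Real.sqrt 10 / 3 *
            Real.sqrt (1 + Real.sqrt (1 -
              3 * Real.log 4 / 5 * (iteratedDeriv 2 Kcurve (Real.log 4) - ℓ))))}) ∧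
    ({x : ℝ | ∀ y : ℝ, g ℓc x ≤ g ℓc y} =
      {0, Real.sqrt (5 / 3), -Real.sqrt (5 / 3)}) := by
  have hβ : 0 < log 4 := log_pos (by norm_num)
  set K2 := iteratedDeriv 2 Kcurve (log 4) with hK2
  have hℓc' : ℓc = K2 - 5 / (4 * log 4) := by
    rw [hℓc, hK2, iteratedDeriv_two_Kcurve_log_four]
    field_simp
    ring
  set a : ℝ → ℝ := fun ℓ => log 4 / 2 * (K2 - ℓ)
  have hga (ℓ : ℝ) : g ℓ = sextic (a ℓ) := funext fun x => by rw [hg, sextic]; ring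
  have ha_sub (ℓ : ℝ) : a ℓ = 5 / 8 - log 4 / 2 * (ℓ - ℓc) := by
    rw [hℓc']
    field_simp
    ring
  refine ⟨hℓc', fun ℓ => ?_, fun ℓ hℓ => ?_, ?_⟩
  · rw [hga, exists_ne_zero_isMin_sextic_iff, ha_sub]
    constructor <;> intro h <;> nlinarith
  · rw [hga, setOf_isMin_sextic (by rw [ha_sub]; nlinarith), xbar,
      show 6 * a ℓ / 5 = 3 * log 4 / 5 * (K2 - ℓ) by ring]
  · rw [hga, show a ℓc = 5 / 8 by rw [ha_sub]; ring, setOf_isMin_sextic_five_eighths]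
end

section
/- Let β satisfy 0 < β ≤ β_c = log 4, and let (β_n, K_n) be a sequence of pairs of positive real numbers with β_n → β and K_n → K(β) as n → ∞. Suppose that for each n, m_n is a global minimum point of G_{β_n,K_n} over ℝ, i.e., G_{β_n,K_n}(m_n) ≤ G_{β_n,K_n}(y) for all y ∈ ℝ. Then m_n → 0 as n → ∞. -/
open Real Filter

/-!
A global minimiser satisfies `G(m_n) ≤ G(0) = 0`, and since `c_β(t) ≤ |t|` this confines it to
`[-2, 2]`. By joint continuity of `G`, every cluster point `x` of `(m_n)` satisfies
`G_{β,K(β)}(x) ≤ 0`. On the curve `K = K(β)` one has `βK = a/4` with `a = e^β + 2`, so that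
`G_{β,K(β)}(x) = t²/a - log((a - 2 + 2 cosh t)/a)` for `t = a x/2`; for `a ≤ 6`, i.e. `β ≤ log 4`,
this is positive when `t ≠ 0`. Differentiating in `t` reduces that to the hyperbolic
Cusa–Huygens inequality `3 sinh t < t (cosh t + 2)`. Hence `0` is the only cluster point.
-/

open Set

lemma apply_zero_lt_of_hasDerivAt_pos {f f' : ℝ → ℝ} (hf : ∀ x, HasDerivAt f (f' x) x)
    (hf' : ∀ x, 0 < x → 0 < f' x) {t : ℝ} (ht : 0 < t) : f 0 < f t := by
  have hmono : StrictMonoOn f (Ici 0) :=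
    strictMonoOn_of_hasDerivWithinAt_pos (convex_Ici 0)
      (fun x _ => (hf x).continuousAt.continuousWithinAt) (fun x _ => (hf x).hasDerivWithinAt)
      (fun x hx => hf' x (by rwa [interior_Ici] at hx))
  exact hmono self_mem_Ici ht.le ht

namespace Real

variable {t : ℝ}

lemma sinh_lt_mul_cosh (ht : 0 < t) : sinh t < t * cosh t := by
  have h := apply_zero_lt_of_hasDerivAt_pos (f := fun s => s * cosh s - sinh s)
    (fun s => ((hasDerivAt_id s).mul (hasDerivAt_cosh s)).sub (hasDerivAt_sinh s)
      |>.congr_deriv (by simp))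
    (fun s hs => mul_pos hs (sinh_pos_iff.2 hs)) ht
  simp only [zero_mul, sinh_zero, sub_zero] at h
  linarith

lemma two_mul_cosh_sub_one_lt_mul_sinh (ht : 0 < t) : 2 * (cosh t - 1) < t * sinh t := by
  have h := apply_zero_lt_of_hasDerivAt_pos (f := fun s => s * sinh s - 2 * (cosh s - 1))
    (fun s => ((hasDerivAt_id s).mul (hasDerivAt_sinh s)).sub
      (((hasDerivAt_cosh s).sub_const 1).const_mul 2) |>.congr_deriv (by simp; ring))
    (fun s hs => sub_pos.2 (sinh_lt_mul_cosh hs)) ht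
  simp only [zero_mul, cosh_zero, sub_self, mul_zero] at h
  linarith

lemma three_mul_sinh_lt_mul_cosh_add_two (ht : 0 < t) : 3 * sinh t < t * (cosh t + 2) := by
  have h := apply_zero_lt_of_hasDerivAt_pos (f := fun s => s * (cosh s + 2) - 3 * sinh s)
    (fun s => ((hasDerivAt_id s).mul ((hasDerivAt_cosh s).add_const 2)).sub
      ((hasDerivAt_sinh s).const_mul 3) |>.congr_deriv (by simp; ring))
    (fun s hs => sub_pos.2 (two_mul_cosh_sub_one_lt_mul_sinh hs)) ht
  simp only [zero_mul, sinh_zero, mul_zero, sub_zero] at h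
  linarith

lemma log_div_lt_sq_div {b t : ℝ} (hb : -2 < b) (hb4 : b ≤ 4) (ht : t ≠ 0) :
    log ((b + 2 * cosh t) / (b + 2)) < t ^ 2 / (b + 2) := by
  have hden : ∀ s, 0 < b + 2 * cosh s := fun s => by linarith [one_le_cosh s]
  have hb2 : 0 < b + 2 := by linarith
  suffices h : -log (b + 2) < |t| ^ 2 / (b + 2) - log (b + 2 * cosh |t|) by
    rw [cosh_abs, sq_abs] at h
    rw [log_div (hden t).ne' hb2.ne']
    linarith
  have hderiv : ∀ s, HasDerivAt (fun s => s ^ 2 / (b + 2) - log (b + 2 * cosh s))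
      (2 * s / (b + 2) - 2 * sinh s / (b + 2 * cosh s)) s := fun s =>
    ((hasDerivAt_pow 2 s).div_const _).sub
      ((((hasDerivAt_cosh s).const_mul 2).const_add b).log (hden s).ne') |>.congr_deriv (by simp)
  have hderiv_pos : ∀ s, 0 < s → 0 < 2 * s / (b + 2) - 2 * sinh s / (b + 2 * cosh s) := by
    intro s hs
    rw [sub_pos, div_lt_div_iff₀ (hden s) hb2]
    -- `s (b + 2 cosh s) - (b + 2) sinh s = 2 (s (cosh s + 2) - 3 sinh s) + (4 - b) (sinh s - s)`
    nlinarith [three_mul_sinh_lt_mul_cosh_add_two hs,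
      mul_nonneg (sub_nonneg.2 hb4) (sub_nonneg.2 (self_le_sinh_iff.2 hs.le))]
  simpa using apply_zero_lt_of_hasDerivAt_pos hderiv hderiv_pos (abs_pos.2 ht)

end Real

lemma cgf_eq_log_cosh (β t : ℝ) :
    cgf β t = log ((exp β + 2 * cosh t) / (exp β + 2)) := by
  rw [cgf, cosh_eq, exp_neg β]
  congr 1
  field_simp

lemma cgf_zero (β : ℝ) : cgf β 0 = 0 := by
  rw [cgf_eq_log_cosh, cosh_zero, mul_one, div_self (by positivity), log_one]

lemma cgf_le_abs (β t : ℝ) : cgf β t ≤ |t| := by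
  rw [cgf_eq_log_cosh, log_le_iff_le_exp (by positivity), div_le_iff₀ (by positivity),
    ← cosh_abs, cosh_eq]
  have h1 : 1 ≤ exp |t| := one_le_exp (abs_nonneg t)
  have h2 : exp (-|t|) ≤ exp |t| := exp_le_exp.2 (by linarith [abs_nonneg t])
  nlinarith [exp_pos β]

lemma freeEnergyG_zero (β K : ℝ) : freeEnergyG β K 0 = 0 := by
  simp [freeEnergyG, cgf_zero]

lemma abs_le_two_of_freeEnergyG_nonpos {β K x : ℝ} (hβ : 0 < β) (hK : 0 < K)
    (h : freeEnergyG β K x ≤ 0) : |x| ≤ 2 := by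
  have hcgf : β * K * x ^ 2 ≤ β * K * (2 * |x|) := by
    have := cgf_le_abs β (2 * β * K * x)
    rw [abs_mul, abs_of_pos (by positivity : 0 < 2 * β * K)] at this
    rw [freeEnergyG] at h
    linarith
  have hsq : |x| ^ 2 ≤ 2 * |x| := by
    rw [sq_abs]; exact le_of_mul_le_mul_left hcgf (by positivity)
  nlinarith [abs_nonneg x]

lemma freeEnergyG_Kcurve_pos {β x : ℝ} (hβ0 : 0 < β) (hβ : β ≤ log 4) (hx : x ≠ 0) :
    0 < freeEnergyG β (Kcurve β) x := by
  have hb4 : exp β ≤ 4 := (exp_le_exp.2 hβ).trans_eq (exp_log (by norm_num))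
  have hβK : β * Kcurve β = (exp β + 2) / 4 := by
    rw [Kcurve]; field_simp
  have harg : 2 * β * Kcurve β * x = (exp β + 2) * x / 2 := by
    rw [mul_assoc 2, hβK]; ring
  have hquad : β * Kcurve β * x ^ 2 = ((exp β + 2) * x / 2) ^ 2 / (exp β + 2) := by
    rw [hβK]; field_simp; ring
  rw [freeEnergyG, cgf_eq_log_cosh, harg, hquad, sub_pos]
  exact log_div_lt_sq_div (by linarith [exp_pos β]) hb4 (by positivity)

lemma continuous_freeEnergyG : Continuous fun p : ℝ × ℝ × ℝ => freeEnergyG p.1 p.2.1 p.2.2 := by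
  unfold freeEnergyG cgf
  fun_prop (disch := intro; positivity)

/-- if `(β_n, K_n)` is a positive sequence converging to a
second-order point or to the tricritical point, then any sequence of global
minimum points of `G_{β_n,K_n}` converges to `0`. -/
theorem stmt13 (β : ℝ) (hβ0 : 0 < β) (hβ : β ≤ Real.log 4)
    (βn Kn : ℕ → ℝ) (hpos : ∀ n : ℕ, 0 < βn n ∧ 0 < Kn n)
    (hβn : Tendsto βn atTop (nhds β)) (hKn : Tendsto Kn atTop (nhds (Kcurve β)))
    (m : ℕ → ℝ)
    (hm : ∀ n : ℕ, ∀ y : ℝ, freeEnergyG (βn n) (Kn n) (m n) ≤ freeEnergyG (βn n) (Kn n) y) :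
    Tendsto m atTop (nhds 0) := by
  have hG_nonpos : ∀ n, freeEnergyG (βn n) (Kn n) (m n) ≤ 0 := fun n =>
    (hm n 0).trans_eq (freeEnergyG_zero _ _)
  have hbounded : ∀ n, m n ∈ Icc (-2) 2 := fun n =>
    abs_le.1 (abs_le_two_of_freeEnergyG_nonpos (hpos n).1 (hpos n).2 (hG_nonpos n))
  refine isCompact_Icc.tendsto_nhds_of_unique_mapClusterPt (.of_forall hbounded) ?_
  intro x _ hx
  obtain ⟨ψ, hψ, hmψ⟩ := hx.tendsto_subseq
  have hψ_atTop := hψ.tendsto_atTop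
  have hlim := (continuous_freeEnergyG.tendsto _).comp
    ((hβn.comp hψ_atTop).prodMk_nhds ((hKn.comp hψ_atTop).prodMk_nhds hmψ))
  have hx_nonpos : freeEnergyG β (Kcurve β) x ≤ 0 :=
    le_of_tendsto hlim (.of_forall fun k => hG_nonpos (ψ k))
  by_contra hx0
  exact (freeEnergyG_Kcurve_pos hβ0 hβ hx0).not_ge hx_nonpos
end

section
/- Fix β ∈ (0, log 4), α > 0, b ∈ {1, 0, −1}, and k ∈ ℝ with K'(β)·b − k < 0. Define β_n = β + b/n^α, K_n = K(β) + k/n^α, and f(b,k) = (96β(k − b·K'(β))/((e^β + 2)²(4 − e^β)))^{1/2}. Suppose (m_n) is a sequence of positive real numbers such that m_n → 0 and, for all sufficiently large n, m_n is a critical point of G_{β_n,K_n}, i.e., G'_{β_n,K_n}(m_n) = 0. Then n^{α/2}·m_n → f(b,k) as n → ∞; i.e., m_n ∼ f(b,k)/n^{α/2}. -/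
open Real Filter

open Topology

/-!
With `u = 2βKx`, the critical-point equation `G'_{β,K}(x) = 0` reads
`u (e^β + 2 cosh u) = 4βK sinh u`, which rearranges exactly into
`u² (2 (cosh u - 1) / u² - 4βK (sinh u - u) / u³) = 4β (K - K(β))`.
Along the sequence the bracket tends to `1 - 4βK(β)/6 = (4 - e^β)/6`, because
`(cosh u - 1)/u² → 1/2` and `(sinh u - u)/u³ → 1/6`, while `n^α (K_n - K(β_n)) → k - b K'(β)`
by differentiability of `K`. Hence `n^α u_n² → 24β (k - b K'(β)) / (4 - e^β)`; taking square
roots and dividing by `2β_n K_n → (e^β + 2)/2` gives the limit.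
-/

lemma tendsto_sinh_div_self : Tendsto (fun x => sinh x / x) (𝓝[≠] 0) (𝓝 1) := by
  refine HasDerivAt.lhopital_zero_nhds (f' := cosh) (g' := fun _ => 1)
    (.of_forall hasDerivAt_sinh) (.of_forall hasDerivAt_id) (.of_forall fun _ => one_ne_zero)
    ?_ ?_ ?_
  · simpa using continuous_sinh.tendsto 0
  · exact tendsto_id
  · simpa using continuous_cosh.tendsto 0

lemma tendsto_cosh_sub_one_div_sq :
    Tendsto (fun x => (cosh x - 1) / x ^ 2) (𝓝[≠] 0) (𝓝 (1 / 2)) := by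
  refine HasDerivAt.lhopital_zero_nhdsNE (f' := sinh) (g' := fun x => 2 * x)
    (.of_forall fun x => (hasDerivAt_cosh x).sub_const 1)
    (.of_forall fun x => by simpa using hasDerivAt_pow 2 x)
    (eventually_nhdsWithin_of_forall fun x hx => mul_ne_zero two_ne_zero hx) ?_ ?_ ?_
  · exact tendsto_nhdsWithin_of_tendsto_nhds
      (by simpa using (continuous_cosh.tendsto 0).sub_const 1)
  · exact tendsto_nhdsWithin_of_tendsto_nhds (by simpa using (continuous_pow 2).tendsto (0 : ℝ))
  · simpa [mul_comm, ← div_div] using tendsto_sinh_div_self.div_const 2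

lemma tendsto_sinh_sub_self_div_cube :
    Tendsto (fun x => (sinh x - x) / x ^ 3) (𝓝[≠] 0) (𝓝 (1 / 6)) := by
  refine HasDerivAt.lhopital_zero_nhdsNE (f' := fun x => cosh x - 1) (g' := fun x => 3 * x ^ 2)
    (.of_forall fun x => (hasDerivAt_sinh x).sub (hasDerivAt_id x))
    (.of_forall fun x => by simpa using hasDerivAt_pow 3 x)
    (eventually_nhdsWithin_of_forall fun x hx => by simpa using hx) ?_ ?_ ?_
  · exact tendsto_nhdsWithin_of_tendsto_nhds
      (by simpa using (continuous_sinh.tendsto 0).sub tendsto_id)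
  · exact tendsto_nhdsWithin_of_tendsto_nhds (by simpa using (continuous_pow 3).tendsto (0 : ℝ))
  · convert tendsto_cosh_sub_one_div_sq.div_const 3 using 2 <;> ring

lemma tendsto_mul_sub_of_hasDerivAt {f : ℝ → ℝ} {f' x : ℝ} (hf : HasDerivAt f f' x) (b : ℝ) :
    Tendsto (fun t => t * (f (x + b / t) - f x)) atTop (𝓝 (b * f')) := by
  have hlin : HasDerivAt (fun s => x + b * s) b 0 := by
    simpa using ((hasDerivAt_id 0).const_mul b).const_add x
  have hg : HasDerivAt (fun s => f (x + b * s)) (b * f') 0 :=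
    (hf.comp_of_eq 0 hlin (by simp)).congr_deriv (mul_comm _ _)
  have hinv : Tendsto (fun t : ℝ => t⁻¹) atTop (𝓝[≠] 0) :=
    tendsto_inv_atTop_nhdsGT_zero.mono_right (nhdsWithin_mono _ fun _ h => ne_of_gt h)
  refine (hg.tendsto_slope_zero.comp hinv).congr fun t => ?_
  simp [div_eq_mul_inv]

lemma cgf_eq (β t : ℝ) : cgf β t = log (exp β + 2 * cosh t) - log (exp β + 2) := by
  have hβ : exp β ≠ 0 := (exp_pos β).ne'
  rw [cgf, ← log_div (by positivity) (by positivity), cosh_eq, exp_neg]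
  congr 1
  field_simp

lemma hasDerivAt_cgf (β t : ℝ) : HasDerivAt (cgf β) (2 * sinh t / (exp β + 2 * cosh t)) t := by
  rw [funext (cgf_eq β)]
  simpa using (((hasDerivAt_cosh t).const_mul 2).const_add (exp β)).log
    (by positivity : exp β + 2 * cosh t ≠ 0) |>.sub_const (log (exp β + 2))

lemma hasDerivAt_freeEnergyG (β K x : ℝ) :
    HasDerivAt (freeEnergyG β K)
      (2 * β * K * x - 2 * β * K *
        (2 * sinh (2 * β * K * x) / (exp β + 2 * cosh (2 * β * K * x)))) x := by
  have hlin : HasDerivAt (fun y => 2 * β * K * y) (2 * β * K) x := by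
    simpa using (hasDerivAt_id x).const_mul (2 * β * K)
  have h := ((hasDerivAt_pow 2 x).const_mul (β * K)).sub ((hasDerivAt_cgf β _).comp x hlin)
  exact h.congr_deriv (by push_cast; ring)

lemma four_mul_mul_Kcurve {β : ℝ} (hβ : β ≠ 0) : 4 * β * Kcurve β = exp β + 2 := by
  rw [Kcurve]
  field_simp

lemma differentiableAt_Kcurve {β : ℝ} (hβ : β ≠ 0) : DifferentiableAt ℝ Kcurve β := by
  unfold Kcurve
  fun_prop (disch := positivity)

lemma tendsto_rpow_mul_sub_Kcurve {β α : ℝ} (hβ : β ≠ 0) (hα : 0 < α) (b k : ℝ) :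
    Tendsto (fun n : ℕ => (n : ℝ) ^ α *
      (Kcurve β + k / (n : ℝ) ^ α - Kcurve (β + b / (n : ℝ) ^ α))) atTop
      (𝓝 (k - b * deriv Kcurve β)) := by
  have hpow : Tendsto (fun n : ℕ => (n : ℝ) ^ α) atTop atTop :=
    (tendsto_rpow_atTop hα).comp tendsto_natCast_atTop_atTop
  refine (((tendsto_mul_sub_of_hasDerivAt (differentiableAt_Kcurve hβ).hasDerivAt b).comp
    hpow).const_sub k).congr' ?_
  filter_upwards [hpow.eventually_gt_atTop 0] with n hn
  simp only [Function.comp_apply]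
  field_simp
  ring

lemma critical_point_eq {β K x : ℝ} (hcrit : deriv (freeEnergyG β K) x = 0)
    (hu : 2 * β * K * x ≠ 0) :
    (2 * β * K * x) ^ 2 * (2 * ((cosh (2 * β * K * x) - 1) / (2 * β * K * x) ^ 2)
      - 4 * β * K * ((sinh (2 * β * K * x) - 2 * β * K * x) / (2 * β * K * x) ^ 3))
      = 4 * β * (K - Kcurve β) := by
  rw [(hasDerivAt_freeEnergyG β K x).deriv] at hcrit
  set u := 2 * β * K * x
  have hβ : β ≠ 0 := by rintro rfl; simp [u] at hu
  have hden : exp β + 2 * cosh u ≠ 0 := by positivity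
  have heq : u * (exp β + 2 * cosh u) = 4 * β * K * sinh u := by
    field_simp at hcrit
    linear_combination hcrit
  have hK := four_mul_mul_Kcurve hβ
  field_simp
  linear_combination heq + u * hK

section SequenceLimits

variable {ι : Type*} {l : Filter ι}

lemma tendsto_scale_mul_sq_of_critical {βs Ks x s : ι → ℝ} {β κ : ℝ}
    (hβ : 0 < β) (hβ4 : exp β ≠ 4)
    (hβs : Tendsto βs l (𝓝 β)) (hKs : Tendsto Ks l (𝓝 (Kcurve β)))
    (hx : Tendsto x l (𝓝[≠] 0))
    (hcrit : ∀ᶠ i in l, deriv (freeEnergyG (βs i) (Ks i)) (x i) = 0)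
    (hgap : Tendsto (fun i => s i * (Ks i - Kcurve (βs i))) l (𝓝 κ)) :
    Tendsto (fun i => s i * (2 * βs i * Ks i * x i) ^ 2) l (𝓝 (24 * β * κ / (4 - exp β))) := by
  set u := fun i => 2 * βs i * Ks i * x i
  have hK : 0 < Kcurve β := by unfold Kcurve; positivity
  have hu : Tendsto u l (𝓝[≠] 0) := by
    rw [tendsto_nhdsWithin_iff] at hx ⊢
    refine ⟨by simpa using ((hβs.const_mul 2).mul hKs).mul hx.1, ?_⟩
    filter_upwards [hx.2, hβs.eventually_ne hβ.ne', hKs.eventually_ne hK.ne'] with i hxi hβi hKi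
    exact mul_ne_zero (mul_ne_zero (mul_ne_zero two_ne_zero hβi) hKi) hxi
  have hD : Tendsto (fun i => 2 * ((cosh (u i) - 1) / u i ^ 2)
      - 4 * βs i * Ks i * ((sinh (u i) - u i) / u i ^ 3)) l (𝓝 ((4 - exp β) / 6)) := by
    have h := ((tendsto_cosh_sub_one_div_sq.comp hu).const_mul 2).sub
      (((hβs.const_mul 4).mul hKs).mul (tendsto_sinh_sub_self_div_cube.comp hu))
    rwa [four_mul_mul_Kcurve hβ.ne',
      show 2 * (1 / 2) - (exp β + 2) * (1 / 6) = (4 - exp β) / 6 by ring] at h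
  have hD0 : (4 - exp β) / 6 ≠ 0 := by
    intro h; apply hβ4; linarith
  have hlim : 4 * β * κ / ((4 - exp β) / 6) = 24 * β * κ / (4 - exp β) := by
    field_simp
    ring
  rw [← hlim]
  refine (((hβs.const_mul 4).mul hgap).div hD hD0).congr' ?_
  filter_upwards [hcrit, hu.eventually eventually_mem_nhdsWithin, hD.eventually_ne hD0]
    with i hci hui hDi
  rw [Pi.div_apply, div_eq_iff hDi]
  linear_combination (-s i) * critical_point_eq hci hui

lemma tendsto_sqrt_mul_of_tendsto_mul_sq {s c x : ι → ℝ} {c₀ L : ℝ}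
    (hs : ∀ᶠ i in l, 0 ≤ s i) (hx : ∀ᶠ i in l, 0 ≤ x i) (hc : Tendsto c l (𝓝 c₀)) (hc₀ : 0 < c₀)
    (h : Tendsto (fun i => s i * (c i * x i) ^ 2) l (𝓝 L)) :
    Tendsto (fun i => √(s i) * x i) l (𝓝 (√L / c₀)) := by
  refine ((continuous_sqrt.tendsto L).comp h |>.div hc hc₀.ne').congr' ?_
  filter_upwards [hs, hx, hc.eventually (lt_mem_nhds hc₀)] with i hsi hxi hci
  show √(s i * (c i * x i) ^ 2) / c i = √(s i) * x i
  rw [sqrt_mul hsi, sqrt_sq (mul_nonneg hci.le hxi)]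
  field_simp

end SequenceLimits

theorem stmt17_general (β α b k : ℝ) (hβ0 : 0 < β) (hβ : β < Real.log 4) (hα : 0 < α)
    (m : ℕ → ℝ) (hmpos : ∀ n : ℕ, 0 < m n) (hm0 : Tendsto m atTop (nhds 0))
    (hcrit : ∀ᶠ n : ℕ in atTop,
      deriv (freeEnergyG (β + b / (n : ℝ) ^ α) (Kcurve β + k / (n : ℝ) ^ α)) (m n) = 0) :
    Tendsto (fun n : ℕ => (n : ℝ) ^ (α / 2) * m n) atTop
      (nhds (Real.sqrt (96 * β * (k - b * deriv Kcurve β) /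
        ((Real.exp β + 2) ^ 2 * (4 - Real.exp β))))) := by
  have hexp : exp β < 4 := by simpa [exp_log] using exp_lt_exp.mpr hβ
  have hpow : Tendsto (fun n : ℕ => (n : ℝ) ^ α) atTop atTop :=
    (tendsto_rpow_atTop hα).comp tendsto_natCast_atTop_atTop
  have hβs : Tendsto (fun n : ℕ => β + b / (n : ℝ) ^ α) atTop (𝓝 β) := by
    simpa using (hpow.const_div_atTop b).const_add β
  have hKs : Tendsto (fun n : ℕ => Kcurve β + k / (n : ℝ) ^ α) atTop (𝓝 (Kcurve β)) := by
    simpa using (hpow.const_div_atTop k).const_add (Kcurve β)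
  have hsq := tendsto_scale_mul_sq_of_critical hβ0 hexp.ne hβs hKs
    (tendsto_nhdsWithin_iff.2 ⟨hm0, .of_forall fun n => (hmpos n).ne'⟩) hcrit
    (tendsto_rpow_mul_sub_Kcurve hβ0.ne' hα b k)
  have hroot := tendsto_sqrt_mul_of_tendsto_mul_sq
    (.of_forall fun n => rpow_nonneg n.cast_nonneg α) (.of_forall fun n => (hmpos n).le)
    ((hβs.const_mul 2).mul hKs) (by unfold Kcurve; positivity) hsq
  have hscale (n : ℕ) : √((n : ℝ) ^ α) = (n : ℝ) ^ (α / 2) := by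
    rw [sqrt_eq_rpow, ← rpow_mul n.cast_nonneg, mul_one_div]
  have hhalf : 2 * β * Kcurve β = (exp β + 2) / 2 := by
    linarith [four_mul_mul_Kcurve hβ0.ne']
  simp only [hscale, hhalf] at hroot
  convert hroot using 2
  rw [← sqrt_sq (by positivity : 0 ≤ (exp β + 2) / 2), ← sqrt_div' _ (sq_nonneg _)]
  congr 1
  field_simp
  ring

/-- exact asymptotics of positive critical points of
`G_{β_n,K_n}` for the sequence converging to a second-order point:
`m_n ∼ f(b,k)/n^{α/2}`. -/
theorem stmt17 (β α b k : ℝ) (hβ0 : 0 < β) (hβ : β < Real.log 4) (hα : 0 < α)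
    (hb : b = 1 ∨ b = 0 ∨ b = -1) (hk : deriv Kcurve β * b - k < 0)
    (m : ℕ → ℝ) (hmpos : ∀ n : ℕ, 0 < m n) (hm0 : Tendsto m atTop (nhds 0))
    (hcrit : ∀ᶠ n : ℕ in atTop,
      deriv (freeEnergyG (β + b / (n : ℝ) ^ α) (Kcurve β + k / (n : ℝ) ^ α)) (m n) = 0) :
    Tendsto (fun n : ℕ => (n : ℝ) ^ (α / 2) * m n) atTop
      (nhds (Real.sqrt (96 * β * (k - b * deriv Kcurve β) /
        ((Real.exp β + 2) ^ 2 * (4 - Real.exp β))))) :=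
  stmt17_general β α b k hβ0 hβ hα m hmpos hm0 hcrit
end
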